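/- Let P be a Poisson random variable with parameter x ≥ 0. Then for every s ≥ 0, E[(P − x)^s] = Σ_{k=0}^{s} x^k S_2(s,k), where S_2(s,k) is the number of partitions of an s-element set into k blocks each of size at least 2. -/

import Mathlib

/-!
Both sides satisfy the same recursion in `s`. For the central moments `μ_s` of `P ~ Poisson(x)`
the identity `E[P f(P)] = x E[f(P + 1)]` with `f = (· - x)^s` gives
`μ_{s+1} = x (∑_{j ≤ s} C(s, j) μ_j - μ_s)`. On the combinatorial side, removing the block that
contains a fixed element `a` of `insert a t` leaves a partition of a proper subset `R ⊂ t`, so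
`T(insert a t) = x ∑_{R ⊂ t} T(R)` for `T(t) = ∑_P x^{#P}`; grouping the subsets `R` by size
turns this into the moment recursion.
-/

open MeasureTheory ProbabilityTheory Filter Real Finset

/-- Associated Stirling numbers of the second kind: the number of partitions of
an `s`-element set into exactly `k` blocks, each of size at least `2`. -/
noncomputable def assocStirling (s k : ℕ) : ℕ :=
  Nat.card {P : Finset (Finset (Fin s)) //
    P.card = k ∧ (∀ B ∈ P, 2 ≤ B.card) ∧ ∀ x : Fin s, ∃! B, B ∈ P ∧ x ∈ B}

noncomputable def poissonWeight (x : ℝ) (ℓ : ℕ) : ℝ :=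
  Real.exp (-x) * x ^ ℓ / ℓ.factorial

noncomputable def poissonCentralMoment (x : ℝ) (s : ℕ) : ℝ :=
  ∑' ℓ : ℕ, poissonWeight x ℓ * ((ℓ : ℝ) - x) ^ s

lemma hasSum_poissonWeight (x : ℝ) : HasSum (poissonWeight x) 1 := by
  have h := (NormedSpace.expSeries_div_hasSum_exp x).mul_left (Real.exp (-x))
  rw [← Real.exp_eq_exp_ℝ, ← Real.exp_add, neg_add_cancel, Real.exp_zero] at h
  exact h.congr_fun fun ℓ => mul_div_assoc _ _ _

lemma summable_poissonWeight_mul_pow_sub (x : ℝ) (s : ℕ) :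
    Summable fun ℓ : ℕ => poissonWeight x ℓ * ((ℓ : ℝ) - x) ^ s := by
  refine Summable.of_norm_bounded ((Real.summable_pow_div_factorial (Real.exp 1 * |x|)).mul_left
    (Real.exp (-x) * s.factorial * Real.exp |x|)) fun ℓ => ?_
  have hpow : |(ℓ : ℝ) - x| ^ s ≤ s.factorial * Real.exp (ℓ + |x|) := by
    have h := Real.pow_div_factorial_le_exp _ (by positivity : 0 ≤ (ℓ : ℝ) + |x|) s
    rw [div_le_iff₀ (by positivity)] at h
    calc |(ℓ : ℝ) - x| ^ s ≤ ((ℓ : ℝ) + |x|) ^ s :=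
          pow_le_pow_left₀ (abs_nonneg _) ((abs_sub _ _).trans_eq (by rw [Nat.abs_cast])) s
      _ ≤ _ := by linarith
  calc ‖poissonWeight x ℓ * ((ℓ : ℝ) - x) ^ s‖
      = Real.exp (-x) * |x| ^ ℓ / ℓ.factorial * |(ℓ : ℝ) - x| ^ s := by
        simp [poissonWeight, abs_of_pos (Real.exp_pos _)]
    _ ≤ Real.exp (-x) * |x| ^ ℓ / ℓ.factorial * (s.factorial * Real.exp (ℓ + |x|)) := by gcongr
    _ = _ := by rw [Real.exp_add, ← Real.exp_one_pow, mul_pow]; ring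

lemma hasSum_poissonCentralMoment (x : ℝ) (s : ℕ) :
    HasSum (fun ℓ : ℕ => poissonWeight x ℓ * ((ℓ : ℝ) - x) ^ s) (poissonCentralMoment x s) :=
  (summable_poissonWeight_mul_pow_sub x s).hasSum

lemma natCast_succ_mul_poissonWeight_succ (x : ℝ) (ℓ : ℕ) :
    ((ℓ : ℝ) + 1) * poissonWeight x (ℓ + 1) = x * poissonWeight x ℓ := by
  simp only [poissonWeight, Nat.factorial_succ, Nat.cast_mul, Nat.cast_succ, pow_succ]
  field_simp

/-- The Stein–Chen identity `E[P f(P)] = x E[f(P + 1)]` for `P ~ Poisson(x)`. -/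
lemma hasSum_natCast_mul_poissonWeight_mul {x a : ℝ} {f : ℕ → ℝ}
    (h : HasSum (fun m : ℕ => poissonWeight x m * f (m + 1)) a) :
    HasSum (fun ℓ : ℕ => ℓ * poissonWeight x ℓ * f ℓ) (x * a) := by
  rw [← hasSum_nat_add_iff' 1]
  simpa [natCast_succ_mul_poissonWeight_succ, mul_assoc] using h.mul_left x

lemma poissonCentralMoment_zero (x : ℝ) : poissonCentralMoment x 0 = 1 := by
  simp [poissonCentralMoment, (hasSum_poissonWeight x).tsum_eq]

lemma poissonCentralMoment_succ (x : ℝ) (s : ℕ) :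
    poissonCentralMoment x (s + 1) = x * (∑ j ∈ range (s + 1), s.choose j * poissonCentralMoment x j
      - poissonCentralMoment x s) := by
  have hshift : HasSum (fun m : ℕ => poissonWeight x m * (((m + 1 : ℕ) : ℝ) - x) ^ s)
      (∑ j ∈ range (s + 1), s.choose j * poissonCentralMoment x j) := by
    refine (hasSum_sum fun j _ => (hasSum_poissonCentralMoment x j).mul_left
      (s.choose j : ℝ)).congr_fun fun m => ?_
    rw [Nat.cast_succ, show (m : ℝ) + 1 - x = (m - x) + 1 by ring, add_pow, mul_sum]
    refine sum_congr rfl fun j _ => ?_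
    ring
  have h := (hasSum_natCast_mul_poissonWeight_mul (f := fun ℓ : ℕ => ((ℓ : ℝ) - x) ^ s)
    hshift).sub ((hasSum_poissonCentralMoment x s).mul_left x)
  rw [mul_sub]
  exact (hasSum_poissonCentralMoment x (s + 1)).unique (h.congr_fun fun ℓ => by ring)

lemma poissonCentralMoment_card_succ {β : Type*} [DecidableEq β] (x : ℝ) (t : Finset β) :
    poissonCentralMoment x (#t + 1) = x * ∑ R ∈ t.ssubsets, poissonCentralMoment x #R := by
  rw [poissonCentralMoment_succ, ssubsets, sum_erase_eq_sub (mem_powerset_self t),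
    sum_powerset_apply_card]
  simp [nsmul_eq_mul]

section AssocPartitions

variable {γ : Type*}

def IsAssocPartition (t : Finset γ) (P : Finset (Finset γ)) : Prop :=
  (∀ B ∈ P, B ⊆ t ∧ 2 ≤ #B) ∧ ∀ y ∈ t, ∃! B, B ∈ P ∧ y ∈ B

namespace IsAssocPartition

variable {t : Finset γ} {P : Finset (Finset γ)}

lemma eq_of_mem (hP : IsAssocPartition t P) {B C : Finset γ} {y : γ} (hB : B ∈ P) (hC : C ∈ P)
    (hyB : y ∈ B) (hyC : y ∈ C) : B = C :=
  (hP.2 y ((hP.1 B hB).1 hyB)).unique ⟨hB, hyB⟩ ⟨hC, hyC⟩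

lemma biUnion_eq [DecidableEq γ] (hP : IsAssocPartition t P) : P.biUnion id = t := by
  ext y
  simp only [mem_biUnion, id]
  exact ⟨fun ⟨B, hB, hyB⟩ => (hP.1 B hB).1 hyB, fun hy => (hP.2 y hy).exists⟩

lemma sdiff_biUnion_erase [DecidableEq γ] (hP : IsAssocPartition t P) {B : Finset γ}
    (hB : B ∈ P) : t \ (P.erase B).biUnion id = B := by
  ext y
  simp only [Finset.mem_sdiff, mem_biUnion, mem_erase, id, not_exists, not_and]
  constructor
  · rintro ⟨hy, hyP⟩
    obtain ⟨C, ⟨hC, hyC⟩, -⟩ := hP.2 y hy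
    by_contra hyB
    exact hyP C ⟨fun hCB => hyB (hCB ▸ hyC), hC⟩ hyC
  · exact fun hyB => ⟨(hP.1 B hB).1 hyB, fun C ⟨hCB, hC⟩ hyC => hCB (hP.eq_of_mem hC hB hyC hyB)⟩

lemma filter_notMem_eq_erase [DecidableEq γ] (hP : IsAssocPartition t P) {B : Finset γ}
    {a : γ} (hB : B ∈ P) (haB : a ∈ B) : {C ∈ P | a ∉ C} = P.erase B := by
  ext C
  simp only [mem_filter, mem_erase]
  exact ⟨fun ⟨hC, haC⟩ => ⟨fun hCB => haC (hCB ▸ haB), hC⟩,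
    fun ⟨hCB, hC⟩ => ⟨hC, fun haC => hCB (hP.eq_of_mem hC hB haC haB)⟩⟩

lemma of_subset [DecidableEq γ] (hP : IsAssocPartition t P) {Q : Finset (Finset γ)}
    (hQ : Q ⊆ P) : IsAssocPartition (Q.biUnion id) Q := by
  refine ⟨fun B hB => ⟨subset_biUnion_of_mem id hB, (hP.1 B (hQ hB)).2⟩, fun y hy => ?_⟩
  obtain ⟨B, hB, hyB⟩ := mem_biUnion.mp hy
  exact ⟨B, ⟨hB, hyB⟩, fun C hC => hP.eq_of_mem (hQ hC.1) (hQ hB) hC.2 hyB⟩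

lemma notMem_of_disjoint (hP : IsAssocPartition t P) {A : Finset γ} (hA : A.Nonempty)
    (hAt : Disjoint A t) : A ∉ P :=
  fun h => hA.ne_empty (disjoint_self.mp (hAt.mono_right (hP.1 A h).1))

lemma insert_of_disjoint [DecidableEq γ] (hP : IsAssocPartition t P) {A : Finset γ} (hA : 2 ≤ #A)
    (hAt : Disjoint A t) : IsAssocPartition (A ∪ t) (insert A P) := by
  refine ⟨?_, fun y hy => ?_⟩
  · simp only [mem_insert, forall_eq_or_imp]
    exact ⟨⟨subset_union_left, hA⟩,
      fun B hB => ⟨(hP.1 B hB).1.trans subset_union_right, (hP.1 B hB).2⟩⟩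
  by_cases hyA : y ∈ A
  · refine ⟨A, ⟨mem_insert_self A P, hyA⟩, fun C ⟨hC, hyC⟩ => ?_⟩
    rcases mem_insert.mp hC with rfl | hC
    · rfl
    · exact absurd ((hP.1 C hC).1 hyC) (disjoint_left.mp hAt hyA)
  · obtain ⟨B, ⟨hB, hyB⟩, huniq⟩ := hP.2 y ((mem_union.mp hy).resolve_left hyA)
    refine ⟨B, ⟨mem_insert_of_mem hB, hyB⟩, fun C ⟨hC, hyC⟩ => ?_⟩
    rcases mem_insert.mp hC with rfl | hC
    · exact absurd hyC hyA
    · exact huniq C ⟨hC, hyC⟩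

lemma biUnion_erase_ssubset [DecidableEq γ] {a : γ} (ha : a ∉ t)
    (hP : IsAssocPartition (insert a t) P) {B : Finset γ} (hB : B ∈ P) (haB : a ∈ B) :
    (P.erase B).biUnion id ⊂ t := by
  set R := (P.erase B).biUnion id
  have hRB : insert a t \ R = B := hP.sdiff_biUnion_erase hB
  have haR : a ∉ R := (Finset.mem_sdiff.mp (hRB ▸ haB)).2
  have hRt : R ⊆ insert a t := biUnion_subset.mpr fun C hC => (hP.1 C (mem_of_mem_erase hC)).1
  refine Finset.ssubset_iff_subset_ne.mpr ⟨(subset_insert_iff_of_notMem haR).mp hRt, ?_⟩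
  rintro hR
  have hB1 : #B = 1 := by
    rw [← hRB, hR, insert_sdiff_of_notMem _ ha, Finset.sdiff_self, insert_empty, card_singleton]
  have := (hP.1 B hB).2
  omega

lemma insert_sdiff [DecidableEq γ] {a : γ} {R : Finset γ} (ha : a ∉ t) (hRt : R ⊂ t)
    {Q : Finset (Finset γ)} (hQ : IsAssocPartition R Q) :
    IsAssocPartition (insert a t) (insert (insert a t \ R) Q) := by
  obtain ⟨y, hyt, hyR⟩ := exists_of_ssubset hRt
  have haR : a ∉ R := fun haR => ha (hRt.subset haR)
  have hA : 2 ≤ #(insert a t \ R) := one_lt_card.mpr ⟨a, by simp [haR], y, by simp [hyt, hyR],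
    fun hay => ha (hay ▸ hyt)⟩
  simpa [sdiff_union_of_subset (hRt.subset.trans (subset_insert a t))]
    using hQ.insert_of_disjoint hA sdiff_disjoint

end IsAssocPartition

-- A partition of `t` is a set of subsets of `t`, hence a member of `t.powerset.powerset`.
open scoped Classical in
noncomputable def assocPartitions (t : Finset γ) (k : ℕ) : Finset (Finset (Finset γ)) :=
  {P ∈ t.powerset.powerset | IsAssocPartition t P ∧ #P = k}

lemma mem_assocPartitions {t : Finset γ} {k : ℕ} {P : Finset (Finset γ)} :
    P ∈ assocPartitions t k ↔ IsAssocPartition t P ∧ #P = k := by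
  classical
  rw [assocPartitions, mem_filter, mem_powerset, and_iff_right_iff_imp]
  exact fun h B hB => mem_powerset.mpr (h.1.1 B hB).1

lemma assocPartitions_empty (k : ℕ) :
    assocPartitions (∅ : Finset γ) k = if k = 0 then {∅} else ∅ := by
  ext P
  have hP : IsAssocPartition ∅ P ↔ P = ∅ := by
    refine ⟨fun h => eq_empty_of_forall_notMem fun B hB => ?_, fun h => ?_⟩
    · have := card_le_card (h.1 B hB).1
      have := (h.1 B hB).2
      simp_all
    · simp [h, IsAssocPartition]
  rw [mem_assocPartitions, hP]
  split_ifs with hk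
  · simp [hk]
  · simp only [notMem_empty, iff_false, not_and]
    rintro rfl
    simpa [eq_comm] using hk

lemma assocPartitions_zero_of_nonempty {t : Finset γ} (ht : t.Nonempty) :
    assocPartitions t 0 = ∅ := by
  refine eq_empty_of_forall_notMem fun P hP => ?_
  obtain ⟨hP, hcard⟩ := mem_assocPartitions.mp hP
  obtain ⟨y, hy⟩ := ht
  obtain ⟨B, ⟨hB, -⟩, -⟩ := hP.2 y hy
  exact notMem_empty B (card_eq_zero.mp hcard ▸ hB)

lemma card_assocPartitions_insert [DecidableEq γ] {a : γ} {t : Finset γ} (ha : a ∉ t) (k : ℕ) :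
    #(assocPartitions (insert a t) (k + 1)) = ∑ R ∈ t.ssubsets, #(assocPartitions R k) := by
  rw [← card_sigma]
  -- `P ↦ (R, Q)`: `Q` is `P` without the block of `a`, and `R` is the set covered by `Q`.
  refine card_nbij' (fun P => ⟨{B ∈ P | a ∉ B}.biUnion id, {B ∈ P | a ∉ B}⟩)
    (fun RQ => insert (insert a t \ RQ.1) RQ.2) ?_ ?_ ?_ ?_
  · intro P hP
    obtain ⟨hP, hcard⟩ := mem_assocPartitions.mp hP
    obtain ⟨B, ⟨hB, haB⟩, -⟩ := hP.2 a (mem_insert_self a t)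
    dsimp only
    rw [mem_coe, mem_sigma, mem_ssubsets, mem_assocPartitions, hP.filter_notMem_eq_erase hB haB,
      card_erase_of_mem hB, hcard, Nat.add_sub_cancel]
    exact ⟨hP.biUnion_erase_ssubset ha hB haB, hP.of_subset (erase_subset B P), rfl⟩
  · rintro ⟨R, Q⟩ hRQ
    rw [mem_coe, mem_sigma, mem_ssubsets, mem_assocPartitions] at hRQ
    dsimp only at hRQ ⊢
    obtain ⟨hRt, hQ, hcard⟩ := hRQ
    have haR : a ∉ R := fun haR => ha (hRt.subset haR)
    rw [mem_coe, mem_assocPartitions, card_insert_of_notMem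
      (hQ.notMem_of_disjoint ⟨a, by simp [haR]⟩ sdiff_disjoint), hcard]
    exact ⟨hQ.insert_sdiff ha hRt, rfl⟩
  · intro P hP
    obtain ⟨hP, -⟩ := mem_assocPartitions.mp hP
    obtain ⟨B, ⟨hB, haB⟩, -⟩ := hP.2 a (mem_insert_self a t)
    dsimp only
    rw [hP.filter_notMem_eq_erase hB haB, hP.sdiff_biUnion_erase hB, insert_erase hB]
  · rintro ⟨R, Q⟩ hRQ
    rw [mem_coe, mem_sigma, mem_ssubsets, mem_assocPartitions] at hRQ
    dsimp only at hRQ ⊢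
    obtain ⟨hRt, hQ, -⟩ := hRQ
    have hfilter : {B ∈ insert (insert a t \ R) Q | a ∉ B} = Q := by
      rw [filter_insert, if_neg (by simpa using fun haR => ha (hRt.subset haR)),
        filter_true_of_mem fun B hB => show a ∉ B from
          fun haB => ha (hRt.subset ((hQ.1 B hB).1 haB))]
    simp only [hfilter, hQ.biUnion_eq]

end AssocPartitions

-- Any `N > #t` works, since `assocPartitions t k` is empty for `k > #t`; allowing all of them
-- lets the induction avoid proving that emptiness.
theorem sum_pow_mul_card_assocPartitions {γ : Type*} [DecidableEq γ] (x : ℝ) (t : Finset γ)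
    {N : ℕ} (hN : #t < N) :
    ∑ k ∈ range N, x ^ k * #(assocPartitions t k) = poissonCentralMoment x #t := by
  induction t using Finset.strongInduction generalizing N with
  | H t ih =>
  obtain ⟨N, rfl⟩ : ∃ M, N = M + 1 := ⟨N - 1, by omega⟩
  rw [sum_range_succ']
  rcases t.eq_empty_or_nonempty with rfl | ⟨a, ha⟩
  · simp [assocPartitions_empty, poissonCentralMoment_zero]
  obtain ⟨u, hau, rfl⟩ : ∃ u, a ∉ u ∧ t = insert a u :=
    ⟨t.erase a, notMem_erase a t, (insert_erase ha).symm⟩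
  rw [card_insert_of_notMem hau] at hN ⊢
  calc ∑ k ∈ range N, x ^ (k + 1) * #(assocPartitions (insert a u) (k + 1))
        + x ^ 0 * #(assocPartitions (insert a u) 0)
      = x * ∑ R ∈ u.ssubsets, ∑ k ∈ range N, x ^ k * #(assocPartitions R k) := by
        simp only [assocPartitions_zero_of_nonempty (insert_nonempty a u),
          card_assocPartitions_insert hau, card_empty, Nat.cast_sum, mul_sum, pow_succ]
        rw [sum_comm]
        simp [mul_assoc, mul_left_comm]
    _ = x * ∑ R ∈ u.ssubsets, poissonCentralMoment x #R := by
        refine congrArg (x * ·) (sum_congr rfl fun R hR => ih R ?_ ?_)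
        · exact (mem_ssubsets.mp hR).trans_subset (subset_insert a u)
        · have := card_lt_card (mem_ssubsets.mp hR); omega
    _ = poissonCentralMoment x (#u + 1) := (poissonCentralMoment_card_succ x u).symm

lemma assocStirling_eq_card_assocPartitions (s k : ℕ) :
    assocStirling s k = #(assocPartitions (univ : Finset (Fin s)) k) := by
  rw [assocStirling, ← Nat.card_eq_finsetCard]
  refine Nat.card_congr (Equiv.subtypeEquivRight fun P => ?_)
  simp only [mem_assocPartitions, IsAssocPartition, subset_univ, true_and, mem_univ, forall_const]
  tauto

theorem poisson_centered_moment_closed_form_general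
    (x : ℝ) (s : ℕ) :
    ∑' ℓ : ℕ, Real.exp (-x) * x ^ ℓ / ℓ.factorial * ((ℓ : ℝ) - x) ^ s
      = ∑ k ∈ Finset.range (s + 1), x ^ k * (assocStirling s k : ℝ) := by
  simp_rw [assocStirling_eq_card_assocPartitions]
  rw [sum_pow_mul_card_assocPartitions x univ (by simp), card_univ, Fintype.card_fin]
  rfl

theorem poisson_centered_moment_closed_form
    (x : ℝ) (hx : 0 ≤ x) (s : ℕ) :
    ∑' ℓ : ℕ, Real.exp (-x) * x ^ ℓ / ℓ.factorial * ((ℓ : ℝ) - x) ^ s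
      = ∑ k ∈ Finset.range (s + 1), x ^ k * (assocStirling s k : ℝ) :=
  poisson_centered_moment_closed_form_general x s
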